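/- arXiv:1303.2331 — 3 statements merged into one kernel-verified Lean document; each statement's English description precedes it below -/
import Mathlib

section
/- For relatively prime integers p and q with q > 0, and for any integer p' with p·p' ≡ 1 (mod q), the quantity 12·s(p,q) − (p' + p)/q is an integer, where s(p,q) is the classical Dedekind sum. -/
open scoped BigOperators

/-- The `k`-th periodic Bernoulli function, as a function on `ℚ`. -/
noncomputable def periodicBernoulli (k : ℕ) (x : ℚ) : ℚ :=
  if x.den = 1 then (if k = 1 then 0 else bernoulli k)
  else (Polynomial.bernoulli k).eval (Int.fract x)

/-- The classical Dedekind sum `s(p,q) = ∑_{k=0}^{q-1} ((k/q))((pk/q))`. -/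
noncomputable def dedekindSum (p : ℤ) (q : ℕ) : ℚ :=
  ∑ k ∈ Finset.range q,
    periodicBernoulli 1 ((k : ℚ) / q) * periodicBernoulli 1 ((p * k : ℚ) / q)


/-!
Write `r k` for the least non-negative residue of `p * k` modulo `q` and `U = ∑ k * r k`.
Evaluating the sawtooth functions gives `s(p,q) = U / q² - (q - 1) / 4`, so the claim is
`12 U ≡ q (p + p') [ZMOD q²]`. Since `k ≡ p' * r k [ZMOD q]` and `k ↦ r k` permutes the residues,
`∑ (k - p' * r k)² ≡ 0 [ZMOD q²]` gives `2 p' U ≡ (1 + p'²) ∑ k² [ZMOD q²]`. Multiplying by `6 p`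
and using `p p' ≡ 1`, `U ≡ p ∑ k² [ZMOD q]` and `6 ∑ k² ≡ q [ZMOD q²]` yields the claim.
-/

open Finset

theorem periodicBernoulli_one_intCast (n : ℤ) : periodicBernoulli 1 n = 0 := by
  simp [periodicBernoulli]

theorem periodicBernoulli_one_of_fract_ne_zero {x : ℚ} (hx : Int.fract x ≠ 0) :
    periodicBernoulli 1 x = Int.fract x - 1 / 2 := by
  have hden : x.den ≠ 1 := fun h ↦ hx <| by
    rw [← Rat.coe_int_num_of_den_eq_one h, Int.fract_intCast]
  simp [periodicBernoulli, hden, Polynomial.bernoulli_one]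

theorem periodicBernoulli_one_intCast_div {q : ℕ} (hq : q ≠ 0) {a : ℤ} (ha : ¬ (q : ℤ) ∣ a) :
    periodicBernoulli 1 ((a : ℚ) / q) = ((a % q : ℤ) : ℚ) / q - 1 / 2 := by
  have hfract : Int.fract ((a : ℚ) / q) = ((a % q : ℤ) : ℚ) / q :=
    Int.fract_div_intCast_eq_div_intCast_mod
  have hne : Int.fract ((a : ℚ) / q) ≠ 0 := by
    simpa [hfract, hq] using mt Int.dvd_of_emod_eq_zero ha
  rw [periodicBernoulli_one_of_fract_ne_zero hne, hfract]

theorem isCoprime_of_mul_modEq_one {p p' n : ℤ} (h : p * p' ≡ 1 [ZMOD n]) : IsCoprime p n := by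
  obtain ⟨d, hd⟩ := h.dvd
  exact ⟨p', d, by linear_combination -hd⟩

theorem mul_emod_modEq_of_mul_modEq_one {n a b : ℤ} (hab : a * b ≡ 1 [ZMOD n]) (k : ℤ) :
    b * (a * k % n) ≡ k [ZMOD n] :=
  calc b * (a * k % n) ≡ b * (a * k) [ZMOD n] := (Int.mod_modEq _ _).mul_left b
    _ = (a * b) * k := by ring
    _ ≡ 1 * k [ZMOD n] := hab.mul_right k
    _ = k := one_mul k

theorem sum_range_emod_mul {M : Type*} [AddCommMonoid M] {q : ℕ} {a : ℤ} (ha : IsCoprime a q)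
    (g : ℤ → M) : ∑ k ∈ range q, g (a * k % q) = ∑ k ∈ range q, g k := by
  obtain ⟨b, c, hbc⟩ := ha
  have hinv : a * b ≡ 1 [ZMOD q] := (Int.modEq_iff_dvd.mpr ⟨-c, by linear_combination hbc⟩).symm
  have hinv' : b * a ≡ 1 [ZMOD q] := by rwa [mul_comm]
  rcases q.eq_zero_or_pos with rfl | hq
  · simp
  have hq' : (q : ℤ) ≠ 0 := by positivity
  have mem (x : ℤ) (k : ℕ) : (x * k % q).toNat ∈ range q := by
    have := Int.emod_lt_of_pos (x * k) (by positivity : (0 : ℤ) < q)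
    rw [mem_range]; omega
  have inv {x y : ℤ} (hxy : x * y ≡ 1 [ZMOD q]) (k : ℕ) (hk : k ∈ range q) :
      (y * (x * k % q).toNat % q).toNat = k := by
    rw [Int.toNat_of_nonneg (Int.emod_nonneg _ hq'), mul_emod_modEq_of_mul_modEq_one hxy k,
      Int.emod_eq_of_lt (by positivity) (by exact_mod_cast mem_range.mp hk), Int.toNat_natCast]
  refine sum_nbij' (fun k ↦ (a * k % q).toNat) (fun k ↦ (b * k % q).toNat)
    (fun k _ ↦ mem a k) (fun k _ ↦ mem b k) (inv hinv) (inv hinv') fun k _ ↦ ?_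
  rw [Int.toNat_of_nonneg (Int.emod_nonneg _ hq')]

def dedekindCrossSum (p : ℤ) (q : ℕ) : ℤ := ∑ k ∈ range q, k * (p * k % q)

theorem sum_range_natCast_id {K : Type*} [Field K] [CharZero K] (q : ℕ) :
    ∑ k ∈ range q, (k : K) = q * (q - 1) / 2 := by
  rcases q.eq_zero_or_pos with rfl | hq
  · simp
  have := congrArg (Nat.cast : ℕ → K) (sum_range_id_mul_two q)
  push_cast [Nat.cast_sub hq] at this
  linear_combination this / 2

theorem dedekindSum_eq_dedekindCrossSum {p : ℤ} {q : ℕ} (hq : q ≠ 0) (hp : IsCoprime p q) :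
    dedekindSum p q = dedekindCrossSum p q / q ^ 2 - (q - 1) / 4 := by
  have hterm : ∀ k ∈ range q,
      periodicBernoulli 1 ((k : ℚ) / q) * periodicBernoulli 1 ((p * k : ℚ) / q) =
        ((k : ℚ) / q - 1 / 2) * (((p * k % q : ℤ) : ℚ) / q - 1 / 2) -
          if k = 0 then 1 / 4 else 0 := by
    intro k hk
    rcases Nat.eq_zero_or_pos k with rfl | hk0
    · have h0 : periodicBernoulli 1 0 = 0 := by simpa using periodicBernoulli_one_intCast 0
      norm_num [h0]
    have hndvd : ¬ (q : ℤ) ∣ k := fun h ↦ by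
      have := Int.le_of_dvd (by positivity) h
      have := mem_range.mp hk
      omega
    have hndvd' : ¬ (q : ℤ) ∣ p * k := fun h ↦ hndvd (hp.symm.dvd_of_dvd_mul_left h)
    have h1 := periodicBernoulli_one_intCast_div hq hndvd
    have h2 := periodicBernoulli_one_intCast_div hq hndvd'
    push_cast at h1 h2
    rw [h1, h2, if_neg hk0.ne', sub_zero, Int.emod_eq_of_lt (by positivity)
      (by exact_mod_cast mem_range.mp hk), Int.cast_natCast]
  have hres : ∑ k ∈ range q, ((p * k % q : ℤ) : ℚ) = ∑ k ∈ range q, (k : ℚ) := by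
    simpa using sum_range_emod_mul hp (fun n : ℤ ↦ (n : ℚ))
  rw [dedekindSum, sum_congr rfl hterm, sum_sub_distrib, sum_ite_eq' _ _ (fun _ ↦ (1 / 4 : ℚ)),
    if_pos (mem_range.mpr (Nat.pos_of_ne_zero hq))]
  simp only [sub_mul, mul_sub, sum_sub_distrib, ← sum_div, ← sum_mul, ← mul_sum, hres]
  have hcross : (dedekindCrossSum p q : ℚ) / q ^ 2 =
      ∑ k ∈ range q, (k : ℚ) / q * (((p * k % q : ℤ) : ℚ) / q) := by
    rw [dedekindCrossSum, Int.cast_sum, sum_div]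
    refine sum_congr rfl fun k _ ↦ ?_
    push_cast
    ring
  rw [← hcross, sum_range_natCast_id, sum_const, card_range, nsmul_one]
  field_simp
  ring

theorem six_mul_sum_range_sq {R : Type*} [CommRing R] (n : ℕ) :
    6 * ∑ k ∈ range n, (k : R) ^ 2 = n * (n - 1) * (2 * n - 1) := by
  induction n with
  | zero => simp
  | succ n ih =>
    rw [sum_range_succ, mul_add, ih]
    push_cast
    ring

theorem twelve_mul_dedekindCrossSum_modEq {p p' : ℤ} {q : ℕ} (hinv : p * p' ≡ 1 [ZMOD q]) :
    12 * dedekindCrossSum p q ≡ q * (p + p') [ZMOD (q : ℤ) ^ 2] := by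
  set U := dedekindCrossSum p q
  set S := ∑ k ∈ range q, (k : ℤ) ^ 2
  have hres_sq : ∑ k ∈ range q, (p * k % q) ^ 2 = S :=
    sum_range_emod_mul (isCoprime_of_mul_modEq_one hinv) (· ^ 2)
  obtain ⟨f, hf⟩ : (q : ℤ) ∣ U - p * S := by
    simp only [S, U, dedekindCrossSum, mul_sum, ← sum_sub_distrib]
    refine dvd_sum fun k _ ↦ ?_
    convert (Int.mod_modEq (p * k) q).symm.dvd.mul_left (k : ℤ) using 1
    ring
  obtain ⟨e, he⟩ : (q : ℤ) ^ 2 ∣ (1 + p' ^ 2) * S - 2 * p' * U := by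
    have hsq : (1 + p' ^ 2) * S - 2 * p' * U =
        ∑ k ∈ range q, ((k : ℤ) - p' * (p * k % q)) ^ 2 :=
      calc (1 + p' ^ 2) * S - 2 * p' * U
          = S - 2 * p' * U + p' ^ 2 * ∑ k ∈ range q, (p * k % q) ^ 2 := by rw [hres_sq]; ring
        _ = _ := by
          simp only [S, U, dedekindCrossSum, mul_sum, ← sum_sub_distrib, ← sum_add_distrib]
          exact sum_congr rfl fun k _ ↦ by ring
    rw [hsq]
    exact dvd_sum fun k _ ↦ pow_dvd_pow_of_dvd (mul_emod_modEq_of_mul_modEq_one hinv k).dvd 2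
  obtain ⟨c, hc⟩ := hinv.dvd
  have hsix : 6 * S = q * (q - 1) * (2 * q - 1) := six_mul_sum_range_sq q
  refine Int.modEq_iff_dvd.mpr ⟨6 * p * e - 12 * c * f - 2 * c * p * (q - 1) * (2 * q - 1)
    - (p + p') * (2 * q - 3) + c * p' * (q - 1) * (2 * q - 1), ?_⟩
  linear_combination (-12 * q * c) * hf + (6 * p) * he + (-12 * U + 6 * p' * S) * hc
    - (2 * q * c * p + p + p' - q * c * p') * hsix

theorem stmt1_general (p p' : ℤ) (q : ℕ) (hq : 0 < q)
    (hinv : p * p' ≡ 1 [ZMOD (q : ℤ)]) :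
    ∃ n : ℤ, 12 * dedekindSum p q - ((p' : ℚ) + p) / q = n := by
  obtain ⟨t, ht⟩ := (twelve_mul_dedekindCrossSum_modEq hinv).dvd
  refine ⟨-t - 3 * (q - 1), ?_⟩
  rw [dedekindSum_eq_dedekindCrossSum hq.ne' (isCoprime_of_mul_modEq_one hinv)]
  have htQ : (q : ℚ) * (p + p') - 12 * dedekindCrossSum p q = q ^ 2 * t := by exact_mod_cast ht
  rw [show (dedekindCrossSum p q : ℚ) = (q * (p + p') - q ^ 2 * t) / 12 by linarith]
  push_cast
  field_simp
  ring

theorem stmt1 (p p' : ℤ) (q : ℕ) (hq : 0 < q) (hco : Int.gcd p q = 1)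
    (hinv : p * p' ≡ 1 [ZMOD (q : ℤ)]) :
    ∃ n : ℤ, 12 * dedekindSum p q - ((p' : ℚ) + p) / q = n :=
  stmt1_general p p' q hq hinv
end

section
/- For the 2-dimensional lattice cone σ generated by primitive vectors v₁ = (1,0) and v₂ = (p,q) with gcd(p,q) = 1 and q > 0, the Todd series satisfies Td_{pq}(x₁,x₂) = q·x₁·x₂ · Σ_{m ∈ ℤ² ∩ σ̌} exp(−⟨m,v₁⟩x₁ − ⟨m,v₂⟩x₂), where σ̌ is the dual cone {m : ⟨m,v₁⟩ ≥ 0, ⟨m,v₂⟩ ≥ 0} (as an identity of formal power series / convergent series for Re(x₁), Re(x₂) > 0). -/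
open scoped BigOperators

/-- `e(x) = exp(2πix)`. -/
noncomputable def eQ (x : ℚ) : ℂ := Complex.exp (2 * (Real.pi : ℂ) * Complex.I * (x : ℂ))

/-- The Todd series `Td_{pq}(x₁,x₂)` of the cone generated by `(1,0)` and `(p,q)`:
the quotient `Γ_σ = ℤ²/⟨(1,0),(p,q)⟩` is represented by `(0,t)`, `t = 0,…,q-1`, with
`χ₁ = e(-pt/q)` and `χ₂ = e(t/q)`. -/
noncomputable def toddSeries (p q : ℕ) (x₁ x₂ : ℂ) : ℂ :=
  ∑ t ∈ Finset.range q,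
    (x₁ / (1 - eQ (((-(p * t : ℤ) : ℤ) : ℚ) / q) * Complex.exp (-x₁))) *
    (x₂ / (1 - eQ ((t : ℚ) / q) * Complex.exp (-x₂)))

/-! Expand both factors `x / (1 - χ e^{-x})` of the Todd series into geometric series. The
`(a, b)`-th coefficient of the `t`-th summand carries the character value `e(t (b - p a) / q)`, and
summing over `t` turns it into `q` times the indicator of `b ≡ p a (mod q)`. The pairs `(a, b) ∈ ℕ²`
with this congruence are exactly the values `(⟨m, v₁⟩, ⟨m, v₂⟩)` for `m` in the dual cone. -/

open Complex

lemma eQ_add (x y : ℚ) : eQ (x + y) = eQ x * eQ y := by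
  rw [eQ, eQ, eQ, ← Complex.exp_add]
  push_cast
  ring_nf

lemma eQ_nat_mul (n : ℕ) (x : ℚ) : eQ (n * x) = eQ x ^ n := by
  rw [eQ, eQ, ← Complex.exp_nat_mul]
  push_cast
  ring_nf

lemma eQ_eq_one_iff (x : ℚ) : eQ x = 1 ↔ ∃ n : ℤ, x = n := by
  have h2πI : 2 * (Real.pi : ℂ) * I ≠ 0 := by simp [Real.pi_ne_zero]
  rw [eQ, Complex.exp_eq_one_iff]
  refine exists_congr fun n => ?_
  rw [mul_comm _ (x : ℂ), mul_left_inj' h2πI]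
  exact_mod_cast Iff.rfl

lemma eQ_intCast (n : ℤ) : eQ n = 1 :=
  (eQ_eq_one_iff n).2 ⟨n, rfl⟩

lemma norm_eQ (x : ℚ) : ‖eQ x‖ = 1 := by
  rw [eQ, show 2 * (Real.pi : ℂ) * I * (x : ℂ) = ((2 * Real.pi * x : ℝ) : ℂ) * I by push_cast; ring,
    Complex.norm_exp_ofReal_mul_I]

lemma sum_range_eQ_mul_div (q : ℕ) (c : ℤ) :
    ∑ t ∈ Finset.range q, eQ (t * c / q) = if (q : ℤ) ∣ c then (q : ℂ) else 0 := by
  rcases eq_or_ne q 0 with rfl | hq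
  · simp
  have hq' : (q : ℚ) ≠ 0 := by exact_mod_cast hq
  have hpow : ∀ t : ℕ, eQ (t * c / q) = eQ (c / q) ^ t := fun t => by
    rw [← eQ_nat_mul, mul_div_assoc]
  split_ifs with hdvd
  · obtain ⟨k, rfl⟩ := hdvd
    have hone : eQ ((q * k : ℤ) / q) = 1 := by
      rw [Int.cast_mul, Int.cast_natCast, mul_div_cancel_left₀ _ hq', eQ_intCast]
    simp_rw [hpow, hone, one_pow, Finset.sum_const, Finset.card_range, nsmul_one]
  · have hζ : eQ (c / q) ≠ 1 := by
      rw [Ne, eQ_eq_one_iff]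
      rintro ⟨n, hn⟩
      exact hdvd ⟨n, by rw [div_eq_iff hq'] at hn; exact_mod_cast hn.trans (mul_comm _ _)⟩
    have hζq : eQ (c / q) ^ q = 1 := by
      rw [← eQ_nat_mul, mul_div_cancel₀ _ hq', eQ_intCast]
    simp_rw [hpow, geom_sum_eq hζ, hζq, sub_self, zero_div]

lemma norm_eQ_mul_exp_neg_lt_one (r : ℚ) {x : ℂ} (hx : 0 < x.re) : ‖eQ r * exp (-x)‖ < 1 := by
  rw [norm_mul, norm_eQ, one_mul, Complex.norm_exp, Real.exp_lt_one_iff, neg_re]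
  exact neg_lt_zero.2 hx

lemma hasSum_pow_mul_pow {z w : ℂ} (hz : ‖z‖ < 1) (hw : ‖w‖ < 1) :
    HasSum (fun ab : ℕ × ℕ => z ^ ab.1 * w ^ ab.2) ((1 - z)⁻¹ * (1 - w)⁻¹) := by
  have hsum {ξ : ℂ} (hξ : ‖ξ‖ < 1) : Summable fun n : ℕ => ‖ξ ^ n‖ := by
    simpa [norm_pow] using summable_geometric_of_lt_one (norm_nonneg _) hξ
  exact (hasSum_geometric_of_norm_lt_one hz).mul (hasSum_geometric_of_norm_lt_one hw)
    (summable_mul_of_summable_norm (hsum hz) (hsum hw))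

lemma eQ_mul_exp_pow_mul_eQ_mul_exp_pow (p q t a b : ℕ) (x₁ x₂ : ℂ) :
    (eQ (((-(p * t : ℤ) : ℤ) : ℚ) / q) * exp (-x₁)) ^ a * (eQ ((t : ℚ) / q) * exp (-x₂)) ^ b =
      eQ (t * ((b - p * a : ℤ) : ℚ) / q) * exp (-a * x₁ - b * x₂) := by
  have hchar : eQ (((-(p * t : ℤ) : ℤ) : ℚ) / q) ^ a * eQ ((t : ℚ) / q) ^ b =
      eQ (t * ((b - p * a : ℤ) : ℚ) / q) := by
    rw [← eQ_nat_mul, ← eQ_nat_mul, ← eQ_add]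
    congr 1
    push_cast
    ring
  have hexp : exp (-x₁) ^ a * exp (-x₂) ^ b = exp (-a * x₁ - b * x₂) := by
    rw [← Complex.exp_nat_mul, ← Complex.exp_nat_mul, ← Complex.exp_add]
    ring_nf
  rw [← hchar, ← hexp]
  ring

lemma hasSum_indicator_toddSeries (p q : ℕ) {x₁ x₂ : ℂ} (h₁ : 0 < x₁.re) (h₂ : 0 < x₂.re) :
    HasSum ({ab : ℕ × ℕ | (q : ℤ) ∣ ab.2 - p * ab.1}.indicator
        fun ab => q * x₁ * x₂ * exp (-ab.1 * x₁ - ab.2 * x₂))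
      (toddSeries p q x₁ x₂) := by
  have hterm : ∀ t ∈ Finset.range q, HasSum
      (fun ab : ℕ × ℕ => x₁ * x₂ * ((eQ (((-(p * t : ℤ) : ℤ) : ℚ) / q) * exp (-x₁)) ^ ab.1 *
        (eQ ((t : ℚ) / q) * exp (-x₂)) ^ ab.2))
      ((x₁ / (1 - eQ (((-(p * t : ℤ) : ℤ) : ℚ) / q) * exp (-x₁))) *
        (x₂ / (1 - eQ ((t : ℚ) / q) * exp (-x₂)))) := fun t _ => by
    rw [div_mul_div_comm, div_eq_mul_inv (x₁ * x₂), mul_inv]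
    exact (hasSum_pow_mul_pow (norm_eQ_mul_exp_neg_lt_one _ h₁)
      (norm_eQ_mul_exp_neg_lt_one _ h₂)).mul_left (x₁ * x₂)
  rw [toddSeries]
  convert hasSum_sum hterm using 1
  ext ⟨a, b⟩
  simp_rw [eQ_mul_exp_pow_mul_eQ_mul_exp_pow, ← Finset.mul_sum, ← Finset.sum_mul,
    sum_range_eQ_mul_div, Set.indicator, Set.mem_ofPred_eq]
  split_ifs <;> ring

def dualConeEquiv (p : ℕ) {q : ℕ} (hq : q ≠ 0) :
    {m : ℤ × ℤ // 0 ≤ m.1 ∧ 0 ≤ (p : ℤ) * m.1 + (q : ℤ) * m.2} ≃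
      {ab : ℕ × ℕ | (q : ℤ) ∣ ab.2 - p * ab.1} where
  toFun m := ⟨(m.1.1.toNat, (p * m.1.1 + q * m.1.2).toNat), by
    rw [Set.mem_ofPred_eq, Int.toNat_of_nonneg m.2.1, Int.toNat_of_nonneg m.2.2]
    exact ⟨m.1.2, by ring⟩⟩
  invFun ab := ⟨(ab.1.1, (ab.1.2 - p * ab.1.1) / q), Int.natCast_nonneg _, by
    rw [Int.mul_ediv_cancel' ab.2, add_sub_cancel]
    exact Int.natCast_nonneg _⟩
  left_inv m := by
    ext
    · exact Int.toNat_of_nonneg m.2.1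
    · simp only [Int.toNat_of_nonneg m.2.1, Int.toNat_of_nonneg m.2.2, add_sub_cancel_left]
      exact Int.mul_ediv_cancel_left _ (Int.natCast_ne_zero.2 hq)
  right_inv ab := by
    ext
    · exact Int.toNat_natCast _
    · simp only [Int.mul_ediv_cancel' ab.2, add_sub_cancel, Int.toNat_natCast]

theorem stmt6_general (p q : ℕ) (x₁ x₂ : ℂ)
    (h₁ : 0 < x₁.re) (h₂ : 0 < x₂.re) :
    toddSeries p q x₁ x₂ =
      (q : ℂ) * x₁ * x₂ *
        ∑' m : {m : ℤ × ℤ // 0 ≤ m.1 ∧ 0 ≤ (p : ℤ) * m.1 + (q : ℤ) * m.2},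
          Complex.exp (-((m.1.1 : ℂ)) * x₁ -
            (((p : ℤ) * m.1.1 + (q : ℤ) * m.1.2 : ℤ) : ℂ) * x₂) := by
  rcases eq_or_ne q 0 with rfl | hq
  · simp [toddSeries]
  have hsum := hasSum_indicator_toddSeries p q h₁ h₂
  rw [← hasSum_subtype_iff_indicator, ← (dualConeEquiv p hq).hasSum_iff] at hsum
  rw [← hsum.tsum_eq, ← tsum_mul_left]
  refine tsum_congr fun ⟨m, hm₁, hm₂⟩ => ?_
  have hcast {n : ℤ} (hn : 0 ≤ n) : ((n.toNat : ℕ) : ℂ) = n := by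
    rw [← Int.cast_natCast, Int.toNat_of_nonneg hn]
  simp only [Function.comp_apply, dualConeEquiv, Equiv.coe_fn_mk, hcast hm₁, hcast hm₂]

theorem stmt6 (p q : ℕ) (hq : 0 < q) (hco : Nat.Coprime p q) (x₁ x₂ : ℂ)
    (h₁ : 0 < x₁.re) (h₂ : 0 < x₂.re) :
    toddSeries p q x₁ x₂ =
      (q : ℂ) * x₁ * x₂ *
        ∑' m : {m : ℤ × ℤ // 0 ≤ m.1 ∧ 0 ≤ (p : ℤ) * m.1 + (q : ℤ) * m.2},
          Complex.exp (-((m.1.1 : ℂ)) * x₁ -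
            (((p : ℤ) * m.1.1 + (q : ℤ) * m.1.2 : ℤ) : ℂ) * x₂) :=
  stmt6_general p q x₁ x₂ h₁ h₂
end

section
/- Let p, q be relatively prime positive integers and let t_{ij}(p,q)/(i!j!) denote the coefficient of x₁^i x₂^j in the Todd series Td_{pq}(x₁,x₂) of the cone generated by (1,0) and (p,q). Then for i, j ≥ 1: t_{ij}(p,q) = −(−q)^{i+j−1}·(s_{ij}(p,q) + δ(i,j)·B_i·B_j), where δ(i,j) = 1 if i = 1 or j = 1 and 0 otherwise, B_i is the i-th Bernoulli number, and s_{ij}(p,q) is the generalized Dedekind sum. -/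
open scoped BigOperators Classical

/-- The generalized Dedekind sum `s_{ij}(p,q)`. -/
noncomputable def genDedekindSum (i j : ℕ) (p : ℤ) (q : ℕ) : ℚ :=
  ∑ k ∈ Finset.range q,
    periodicBernoulli i ((k : ℚ) / q) * periodicBernoulli j ((p * k : ℚ) / q)

/-- The power series `e^{-x} = ∑ (-1)^n x^n / n!`. -/
noncomputable def expNeg : PowerSeries ℂ :=
  PowerSeries.mk fun n => ((-1 : ℂ)) ^ n / n.factorial

/-- The one-variable twisted Todd power series `Td^λ(x) = x/(1-λe^{-x})`:
for `λ = 1` it is `∑ B'_n x^n/n!` (Bernoulli numbers with `B'₁ = 1/2`), and for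
`λ ≠ 1` the constant term of `1 - λe^{-x}` is nonzero so it is invertible. -/
noncomputable def toddLambda (l : ℂ) : PowerSeries ℂ :=
  if l = 1 then PowerSeries.mk fun n => ((bernoulli' n : ℚ) : ℂ) / n.factorial
  else PowerSeries.X * (1 - PowerSeries.C (R := ℂ) l * expNeg)⁻¹

/-- `t_{ij}(p,q)`: `i!j!` times the `x₁^i x₂^j`-coefficient of the Todd series
`Td_{pq}(x₁,x₂) = ∑_{t∈ℤ/q} Td^{χ₁(t)}(x₁) Td^{χ₂(t)}(x₂)` of the cone generated by
`(1,0)` and `(p,q)`, where `χ₁(t) = e(-pt/q)`, `χ₂(t) = e(t/q)`. -/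
noncomputable def toddCoeff (p q i j : ℕ) : ℂ :=
  (i.factorial : ℂ) * j.factorial *
    ∑ t ∈ Finset.range q,
      (PowerSeries.coeff (R := ℂ) i (toddLambda (eQ (((-(p * t : ℤ) : ℤ) : ℚ) / q)))) *
      (PowerSeries.coeff (R := ℂ) j (toddLambda (eQ ((t : ℚ) / q))))

/-!
For `l ^ q = 1`, grouping `x / (1 - l e^{-x}) = ∑_{m ≥ 0} l^m x e^{-mx}` along `m = k + qr` gives
`Td^l(x) = q⁻¹ ∑_{k<q} l^k · qx e^{(1 - k/q)qx} / (e^{qx} - 1)`, so that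
`n! [x^n] Td^l = q^{n-1} ∑_k l^k B_n(1 - k/q)`.
In the product of two such expansions summed over `t`, the characters average out on `ℤ/q` and
leave `q^{i+j-1} ∑_k B_i(1 - k/q) B_j(1 - {pk/q})`. The reflection `B_n(1 - x) = (-1)^n B_n(x)`
turns this into the Dedekind sum, except at `k = 0`, where `B̄₁(0) = 0` differs from `B₁(0) = B₁`:
that discrepancy is the correction `δ(i,j) B_i B_j`.
-/

open PowerSeries Finset

section BernoulliSeries

variable {K : Type*} [Field K] [Algebra ℚ K]

noncomputable def bernoulliSeries (t : K) : K⟦X⟧ :=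
  PowerSeries.mk fun n => Polynomial.aeval t ((1 / n.factorial : ℚ) • Polynomial.bernoulli n)

theorem bernoulliSeries_mul_exp_sub_one (t : K) :
    bernoulliSeries t * (exp K - 1) = X * rescale t (exp K) :=
  Polynomial.bernoulli_generating_function t

theorem coeff_bernoulliSeries (t : K) (n : ℕ) :
    coeff n (bernoulliSeries t) = Polynomial.aeval t (Polynomial.bernoulli n) / n.factorial := by
  rw [bernoulliSeries, coeff_mk, map_smul, Algebra.smul_def]
  simp [div_eq_inv_mul]

theorem aeval_ratCast (P : Polynomial ℚ) (x : ℚ) : Polynomial.aeval (x : K) P = P.eval x := by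
  rw [← eq_ratCast (algebraMap ℚ K), Polynomial.aeval_algebraMap_apply,
    Polynomial.coe_aeval_eq_eval, eq_ratCast]

theorem rescale_exp_sub_one_ne_zero {c : K} (hc : c ≠ 0) : rescale c (exp K) - 1 ≠ 0 := by
  intro h
  simpa [coeff_rescale, coeff_exp, hc] using congrArg (coeff 1) h

theorem bernoulliSeries_one_sub_bernoulliSeries_zero :
    bernoulliSeries (1 : K) - bernoulliSeries 0 = X := by
  refine mul_right_cancel₀ (by simpa using rescale_exp_sub_one_ne_zero (one_ne_zero (α := K))) ?_
  rw [sub_mul, bernoulliSeries_mul_exp_sub_one, bernoulliSeries_mul_exp_sub_one, rescale_one,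
    rescale_zero]
  simp [mul_sub]

theorem rescale_neg_one_exp_mul_rescale_bernoulliSeries {c : K} (hc : c ≠ 0) (u : K) :
    rescale (-1) (exp K) * rescale c (bernoulliSeries u) =
      rescale c (bernoulliSeries (u - c⁻¹)) := by
  have scaled (v : K) : rescale c (bernoulliSeries v) * (rescale c (exp K) - 1) =
      C c * X * rescale (v * c) (exp K) := by
    simpa [rescale_X, rescale_rescale] using
      congrArg (rescale c) (bernoulliSeries_mul_exp_sub_one v)
  refine mul_right_cancel₀ (rescale_exp_sub_one_ne_zero hc) ?_
  rw [mul_assoc, scaled, scaled, sub_mul, inv_mul_cancel₀ hc, mul_left_comm,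
    exp_mul_exp_eq_exp_add, neg_add_eq_sub]

/-- The sum telescopes: multiplication by `l e^{-x}` turns the `k`-th summand into the `k+1`-st,
and `l ^ q = 1` makes the last one the `0`-th with `B(0)` in place of `B(1)`. -/
theorem one_sub_C_mul_rescale_exp_mul_sum_bernoulliSeries {q : ℕ} (hq : 0 < q) {l : K}
    (hl : l ^ q = 1) :
    (1 - C l * rescale (-1) (exp K)) *
        ∑ k ∈ range q, C (l ^ k) * rescale (q : K) (bernoulliSeries (1 - k / q)) =
      C (q : K) * X := by
  have : CharZero K := algebraRat.charZero K
  have hq0 : (q : K) ≠ 0 := Nat.cast_ne_zero.mpr hq.ne'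
  set a : ℕ → K⟦X⟧ := fun k => C (l ^ k) * rescale (q : K) (bernoulliSeries (1 - k / q))
  have step (k : ℕ) : (1 - C l * rescale (-1) (exp K)) * a k = a k - a (k + 1) := by
    have shift : 1 - ((k + 1 : ℕ) : K) / q = 1 - k / q - (q : K)⁻¹ := by push_cast; ring
    simp only [a, shift, ← rescale_neg_one_exp_mul_rescale_bernoulliSeries hq0, pow_succ, map_mul]
    ring
  rw [mul_sum, sum_congr rfl fun k _ => step k, sum_range_sub']
  simp only [a, hl, pow_zero, map_one, one_mul, Nat.cast_zero, zero_div, sub_zero,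
    div_self hq0, sub_self, ← map_sub, bernoulliSeries_one_sub_bernoulliSeries_zero, rescale_X]

end BernoulliSeries

theorem expNeg_eq_rescale_exp : expNeg = rescale (-1) (exp ℂ) := by
  ext n
  simp [expNeg, coeff_rescale, coeff_exp, div_eq_mul_inv]

theorem one_sub_C_mul_expNeg_mul_toddLambda (l : ℂ) :
    (1 - C l * expNeg) * toddLambda l = X := by
  rcases eq_or_ne l 1 with rfl | hl
  · have hB : (PowerSeries.mk fun n => ((bernoulli' n : ℚ) : ℂ) / n.factorial) =
        bernoulli'PowerSeries ℂ := by
      ext n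
      simp [bernoulli'PowerSeries, div_eq_mul_inv]
    have hexp : (1 - expNeg) * exp ℂ = exp ℂ - 1 := by
      rw [expNeg_eq_rescale_exp, ← evalNegHom, sub_mul, mul_comm (evalNegHom _),
        exp_mul_exp_neg_eq_one, one_mul]
    have hexp0 : exp ℂ ≠ 0 := fun h => by simpa using congrArg constantCoeff h
    refine mul_right_cancel₀ hexp0 ?_
    rw [toddLambda, if_pos rfl, hB, map_one, one_mul, mul_right_comm, hexp, mul_comm,
      bernoulli'PowerSeries_mul_exp_sub_one]
  · have hunit : constantCoeff (1 - C l * expNeg) ≠ 0 := by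
      simpa [expNeg, sub_eq_zero] using hl.symm
    rw [toddLambda, if_neg hl, mul_left_comm, PowerSeries.mul_inv_cancel _ hunit, mul_one]

theorem C_mul_toddLambda_eq_sum {q : ℕ} (hq : 0 < q) {l : ℂ} (hl : l ^ q = 1) :
    C (q : ℂ) * toddLambda l =
      ∑ k ∈ range q, C (l ^ k) * rescale (q : ℂ) (bernoulliSeries (1 - k / q)) := by
  have h := one_sub_C_mul_expNeg_mul_toddLambda l
  refine mul_left_cancel₀ (left_ne_zero_of_mul (h ▸ X_ne_zero)) ?_
  rw [mul_left_comm, h, expNeg_eq_rescale_exp,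
    one_sub_C_mul_rescale_exp_mul_sum_bernoulliSeries hq hl, mul_comm]

theorem coeff_toddLambda {q : ℕ} (hq : 0 < q) {l : ℂ} (hl : l ^ q = 1) (n : ℕ) :
    coeff n (toddLambda l) = (q : ℂ) ^ n / (q * n.factorial) *
      ∑ k ∈ range q, l ^ k * (((Polynomial.bernoulli n).eval (1 - k / q : ℚ) : ℚ) : ℂ) := by
  have hq0 : (q : ℂ) ≠ 0 := Nat.cast_ne_zero.mpr hq.ne'
  have h := congrArg (coeff n) (C_mul_toddLambda_eq_sum hq hl)
  simp only [coeff_C_mul, map_sum, coeff_rescale, coeff_bernoulliSeries] at h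
  have hcast (k : ℕ) : Polynomial.aeval (1 - k / q : ℂ) (Polynomial.bernoulli n) =
      (((Polynomial.bernoulli n).eval (1 - k / q : ℚ) : ℚ) : ℂ) := by
    rw [← aeval_ratCast]
    push_cast
    rfl
  simp only [hcast] at h
  refine mul_left_cancel₀ hq0 ?_
  rw [h, mul_sum, mul_sum]
  refine sum_congr rfl fun k _ => ?_
  field_simp

theorem eQ_intCast_div (q : ℕ) (c : ℤ) :
    eQ (c / q) = Complex.exp (2 * Real.pi * Complex.I / q) ^ c := by
  rw [eQ, ← Complex.exp_int_mul]
  congr 1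
  push_cast
  ring

theorem eQ_intCast_div_eq_one_iff {q : ℕ} (hq : q ≠ 0) (c : ℤ) :
    eQ (c / q) = 1 ↔ (q : ℤ) ∣ c := by
  rw [eQ_intCast_div q]
  exact (Complex.isPrimitiveRoot_exp q hq).zpow_eq_one_iff_dvd c

theorem eQ_intCast_div_pow_self {q : ℕ} (hq : q ≠ 0) (c : ℤ) : eQ (c / q) ^ q = 1 := by
  rw [eQ_intCast_div q, ← zpow_natCast, ← zpow_mul, mul_comm c, zpow_mul, zpow_natCast,
    (Complex.isPrimitiveRoot_exp q hq).pow_eq_one, one_zpow]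

theorem sum_range_eQ_intCast_div_pow {q : ℕ} (hq : q ≠ 0) (c : ℤ) :
    ∑ t ∈ range q, eQ (c / q) ^ t = if (q : ℤ) ∣ c then (q : ℂ) else 0 := by
  split_ifs with h
  · simp [(eQ_intCast_div_eq_one_iff hq c).2 h]
  · rw [geom_sum_eq ((eQ_intCast_div_eq_one_iff hq c).not.2 h), eQ_intCast_div_pow_self hq]
    simp

theorem sum_range_twisted_mul_twisted {q : ℕ} (hq : q ≠ 0) (p : ℕ) (a b : ℕ → ℂ) :
    ∑ t ∈ range q, (∑ k ∈ range q, eQ (((-(p * t : ℤ) : ℤ) : ℚ) / q) ^ k * a k) *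
        (∑ m ∈ range q, eQ ((t : ℚ) / q) ^ m * b m) =
      q * ∑ k ∈ range q, a k * b (p * k % q) := by
  have hζ0 : Complex.exp (2 * Real.pi * Complex.I / q) ≠ 0 := Complex.exp_ne_zero _
  have hchar (t k m : ℕ) : eQ (((-(p * t : ℤ) : ℤ) : ℚ) / q) ^ k * eQ ((t : ℚ) / q) ^ m =
      eQ ((((m : ℤ) - (p * k : ℕ) : ℤ) : ℚ) / q) ^ t := by
    simp only [← Int.cast_natCast (R := ℚ) t, eQ_intCast_div q, ← zpow_natCast, ← zpow_mul,
      ← zpow_add₀ hζ0]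
    congr 1
    push_cast
    ring
  have hdvd {k m : ℕ} (hm : m < q) : (q : ℤ) ∣ (m : ℤ) - (p * k : ℕ) ↔ m = p * k % q := by
    rw [← Nat.modEq_iff_dvd, Nat.ModEq, Nat.mod_eq_of_lt hm, eq_comm]
  calc _ = ∑ k ∈ range q, ∑ m ∈ range q,
        (∑ t ∈ range q, eQ ((((m : ℤ) - (p * k : ℕ) : ℤ) : ℚ) / q) ^ t) * (a k * b m) := by
        simp_rw [sum_mul_sum, sum_mul, ← hchar]
        rw [sum_comm]
        refine sum_congr rfl fun k _ => sum_comm.trans (sum_congr rfl fun m _ => ?_)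
        exact sum_congr rfl fun t _ => by ring
    _ = ∑ k ∈ range q, ∑ m ∈ range q, if m = p * k % q then q * (a k * b m) else 0 := by
        refine sum_congr rfl fun k _ => sum_congr rfl fun m hm => ?_
        simp only [sum_range_eQ_intCast_div_pow hq, hdvd (mem_range.1 hm), ite_mul, zero_mul]
    _ = _ := by
        simp [mul_sum, Nat.mod_lt _ (Nat.pos_of_ne_zero hq)]

theorem periodicBernoulli_natCast_div {q a : ℕ} (hq : q ≠ 0) (h : ¬ q ∣ a) (n : ℕ) :
    periodicBernoulli n (a / q) = (Polynomial.bernoulli n).eval (((a % q : ℕ) : ℚ) / q) := by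
  rw [periodicBernoulli, if_neg (by rwa [Rat.den_div_natCast_eq_one_iff _ _ hq]),
    Int.fract_div_natCast_eq_div_natCast_mod]

theorem sum_range_bernoulli_mul_bernoulli_mod {p q : ℕ} (hq : 0 < q) (hco : p.Coprime q)
    (i j : ℕ) :
    ∑ k ∈ range q, (Polynomial.bernoulli i).eval ((k : ℚ) / q) *
        (Polynomial.bernoulli j).eval (((p * k % q : ℕ) : ℚ) / q) =
      genDedekindSum i j p q +
        (if i = 1 ∨ j = 1 then (1 : ℚ) else 0) * bernoulli i * bernoulli j := by
  obtain ⟨q, rfl⟩ := Nat.exists_eq_add_one.2 hq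
  have hrest (k : ℕ) (hk : k ∈ range q) :
      (Polynomial.bernoulli i).eval (((k + 1 : ℕ) : ℚ) / (q + 1 : ℕ)) *
        (Polynomial.bernoulli j).eval (((p * (k + 1) % (q + 1) : ℕ) : ℚ) / (q + 1 : ℕ)) =
      periodicBernoulli i (((k + 1 : ℕ) : ℚ) / (q + 1 : ℕ)) *
        periodicBernoulli j (((p : ℤ) * (k + 1 : ℕ) : ℚ) / (q + 1 : ℕ)) := by
    have hlt : k + 1 < q + 1 := Nat.succ_lt_succ (mem_range.1 hk)
    have hndvd : ¬ q + 1 ∣ k + 1 := Nat.not_dvd_of_pos_of_lt k.succ_pos hlt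
    have hpndvd : ¬ q + 1 ∣ p * (k + 1) := fun h => hndvd (hco.symm.dvd_of_dvd_mul_left h)
    rw [show ((p : ℤ) * (k + 1 : ℕ) : ℚ) = ((p * (k + 1) : ℕ) : ℚ) by push_cast; ring,
      periodicBernoulli_natCast_div q.succ_ne_zero hndvd,
      periodicBernoulli_natCast_div q.succ_ne_zero hpndvd, Nat.mod_eq_of_lt hlt]
  rw [genDedekindSum, sum_range_succ', sum_range_succ', sum_congr rfl hrest]
  simp only [periodicBernoulli, Nat.cast_zero, zero_div, mul_zero, Nat.zero_mod, Rat.den_zero,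
    Polynomial.bernoulli_eval_zero, if_true]
  split_ifs <;> simp_all

theorem stmt8_general (p q : ℕ) (hq : 0 < q) (hco : Nat.Coprime p q)
    (i j : ℕ) (hi : 1 ≤ i) :
    toddCoeff p q i j =
      -(-(q : ℂ)) ^ (i + j - 1) *
        ((genDedekindSum i j p q +
          (if i = 1 ∨ j = 1 then (1 : ℚ) else 0) * bernoulli i * bernoulli j : ℚ) : ℂ) := by
  have hl (c : ℤ) : eQ (c / q) ^ q = 1 := eQ_intCast_div_pow_self hq.ne' c
  obtain ⟨i, rfl⟩ := Nat.exists_eq_add_one.2 hi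
  set B : ℕ → ℕ → ℂ := fun n k => (((Polynomial.bernoulli n).eval (1 - k / q : ℚ) : ℚ) : ℂ)
  calc toddCoeff p q (i + 1) j
      = (i + 1).factorial * j.factorial * ((q : ℂ) ^ (i + 1) / (q * (i + 1).factorial)) *
          ((q : ℂ) ^ j / (q * j.factorial)) *
            (q * ∑ k ∈ range q, B (i + 1) k * B j (p * k % q)) := by
        rw [toddCoeff, ← sum_range_twisted_mul_twisted hq.ne', mul_sum, mul_sum]
        refine sum_congr rfl fun t _ => ?_
        rw [coeff_toddLambda hq (hl _), coeff_toddLambda hq (by simpa using hl t)]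
        ring
    _ = (q : ℂ) ^ (i + j) * ∑ k ∈ range q, B (i + 1) k * B j (p * k % q) := by
        have hq0 : (q : ℂ) ≠ 0 := Nat.cast_ne_zero.2 hq.ne'
        have hfi : ((i + 1).factorial : ℂ) ≠ 0 := Nat.cast_ne_zero.2 (Nat.factorial_ne_zero _)
        have hfj : (j.factorial : ℂ) ≠ 0 := Nat.cast_ne_zero.2 (Nat.factorial_ne_zero _)
        field_simp
        ring
    _ = -(-(q : ℂ)) ^ (i + j) * ∑ k ∈ range q,
          (((Polynomial.bernoulli (i + 1)).eval ((k : ℚ) / q) *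
            (Polynomial.bernoulli j).eval (((p * k % q : ℕ) : ℚ) / q) : ℚ) : ℂ) := by
        simp only [B, Polynomial.bernoulli_eval_one_sub, mul_sum, neg_pow (q : ℂ)]
        refine sum_congr rfl fun k _ => ?_
        push_cast
        ring
    _ = _ := by
        rw [← Rat.cast_sum, sum_range_bernoulli_mul_bernoulli_mod hq hco, Nat.add_right_comm,
          Nat.add_sub_cancel]

theorem stmt8 (p q : ℕ) (hp : 0 < p) (hq : 0 < q) (hco : Nat.Coprime p q)
    (i j : ℕ) (hi : 1 ≤ i) (hj : 1 ≤ j) :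
    toddCoeff p q i j =
      -(-(q : ℂ)) ^ (i + j - 1) *
        ((genDedekindSum i j p q +
          (if i = 1 ∨ j = 1 then (1 : ℚ) else 0) * bernoulli i * bernoulli j : ℚ) : ℂ) :=
  stmt8_general p q hq hco i j hi
end
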